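/- Scarf's explicit worst-case cost formula: under b > c, c+h > 0, μ > 0, σ > 0 and M the set of probability measures on ℝ₊ with mean μ and second moment μ²+σ², ψ(x) = c·μ + ((b+h)/2)·√((x−μ)²+σ²) − ((b−h−2c)/2)(x−μ) for x ≥ (μ²+σ²)/(2μ); ψ(x) = ((h+c)σ² − (b−c)μ²)/(μ²+σ²)·x + b·μ for 0 ≤ x < (μ²+σ²)/(2μ); and ψ(x) = b·μ − (b−c)x for x < 0. -/

import Mathlib

/-!
Since `(d - x)⁺ = (d - x) + (x - d)⁺`, the cost is `c x + b (d - x) + (b + h) (x - d)⁺`, so for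
`b + h ≥ 0` everything reduces to maximizing the expected overage `E[(x - D)⁺]` over the moment
family. In each regime the maximum is certified by weak duality: a quadratic `γ (d - e)²`
dominating `(x - d)⁺` on `[0, ∞)` bounds the overage by `γ ((μ - e)² + σ²)`, and a two-point
distribution touching the quadratic at both of its atoms attains this bound.
-/

open MeasureTheory Set

/-- Membership in the moment family: probability measures on ℝ₊ with mean μ
and second moment μ²+σ². -/
def inMomentFamily (μ σ : ℝ) (Q : MeasureTheory.Measure ℝ) : Prop :=
  MeasureTheory.IsProbabilityMeasure Q ∧ Q (Set.Ici (0:ℝ))ᶜ = 0 ∧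
    MeasureTheory.Integrable id Q ∧ MeasureTheory.Integrable (fun t => t ^ 2) Q ∧
    (∫ t, t ∂Q) = μ ∧ (∫ t, t ^ 2 ∂Q) = μ ^ 2 + σ ^ 2

/-- Scarf's worst-case cost ψ(x). -/
noncomputable def scarfPsi (c b h μ σ : ℝ) (x : ℝ) : ℝ :=
  sSup ((fun Q : MeasureTheory.Measure ℝ =>
    ∫ d, c * x + b * max (d - x) 0 + h * max (x - d) 0 ∂Q) ''
      {Q | inMomentFamily μ σ Q})
def overageValues (μ σ x : ℝ) : Set ℝ :=
  (fun Q : Measure ℝ => ∫ d, max (x - d) 0 ∂Q) '' {Q | inMomentFamily μ σ Q}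

noncomputable def twoPoint (p q d₁ d₂ : ℝ) : Measure ℝ :=
  ENNReal.ofReal p • Measure.dirac d₁ + ENNReal.ofReal q • Measure.dirac d₂

section TwoPoint

variable {p q d₁ d₂ : ℝ}

lemma integrable_twoPoint (f : ℝ → ℝ) : Integrable f (twoPoint p q d₁ d₂) :=
  ((integrable_dirac enorm_lt_top).smul_measure ENNReal.ofReal_ne_top).add_measure
    ((integrable_dirac enorm_lt_top).smul_measure ENNReal.ofReal_ne_top)

lemma integral_twoPoint (f : ℝ → ℝ) (hp : 0 ≤ p) (hq : 0 ≤ q) :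
    ∫ t, f t ∂(twoPoint p q d₁ d₂) = p * f d₁ + q * f d₂ := by
  rw [twoPoint, integral_add_measure
      ((integrable_dirac enorm_lt_top).smul_measure ENNReal.ofReal_ne_top)
      ((integrable_dirac enorm_lt_top).smul_measure ENNReal.ofReal_ne_top),
    integral_smul_measure, integral_smul_measure, integral_dirac, integral_dirac,
    ENNReal.toReal_ofReal hp, ENNReal.toReal_ofReal hq, smul_eq_mul, smul_eq_mul]

lemma inMomentFamily_twoPoint {μ σ : ℝ} (hp : 0 ≤ p) (hq : 0 ≤ q) (hpq : p + q = 1)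
    (hd₁ : 0 ≤ d₁) (hd₂ : 0 ≤ d₂) (hm : p * d₁ + q * d₂ = μ)
    (hm₂ : p * d₁ ^ 2 + q * d₂ ^ 2 = μ ^ 2 + σ ^ 2) :
    inMomentFamily μ σ (twoPoint p q d₁ d₂) := by
  refine ⟨⟨?_⟩, by simp [twoPoint, hd₁, hd₂], integrable_twoPoint _, integrable_twoPoint _,
    (integral_twoPoint _ hp hq).trans hm, (integral_twoPoint _ hp hq).trans hm₂⟩
  simp only [twoPoint, Measure.add_apply, Measure.smul_apply, measure_univ, smul_eq_mul,
    mul_one]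
  rw [← ENNReal.ofReal_add hp hq, hpq, ENNReal.ofReal_one]

end TwoPoint

section MomentFamily

variable {μ σ x : ℝ} {Q : Measure ℝ}

lemma integrable_overage (hQ : inMomentFamily μ σ Q) :
    Integrable (fun d => max (x - d) 0) Q :=
  have := hQ.1
  ((integrable_const x).sub hQ.2.2.1).sup (integrable_const 0)

lemma integrable_quadratic (α β γ : ℝ) (hQ : inMomentFamily μ σ Q) :
    Integrable (fun d => α + β * d + γ * d ^ 2) Q :=
  have := hQ.1
  ((integrable_const α).add (hQ.2.2.1.const_mul β)).add (hQ.2.2.2.1.const_mul γ)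

lemma integral_quadratic (α β γ : ℝ) (hQ : inMomentFamily μ σ Q) :
    ∫ d, α + β * d + γ * d ^ 2 ∂Q = α + β * μ + γ * (μ ^ 2 + σ ^ 2) := by
  have := hQ.1
  have hid : Integrable (fun d : ℝ => d) Q := hQ.2.2.1
  have haff : Integrable (fun d : ℝ => α + β * d) Q := (integrable_const α).add (hid.const_mul β)
  rw [integral_add haff (hQ.2.2.2.1.const_mul γ),
    integral_add (integrable_const α) (hid.const_mul β), integral_const_mul,
    integral_const_mul, hQ.2.2.2.2.1, hQ.2.2.2.2.2]
  simp

lemma integral_cost_eq (c b h : ℝ) (hQ : inMomentFamily μ σ Q) :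
    ∫ d, c * x + b * max (d - x) 0 + h * max (x - d) 0 ∂Q
      = c * x + b * (μ - x) + (b + h) * ∫ d, max (x - d) 0 ∂Q := by
  have hcost : ∀ d : ℝ, c * x + b * max (d - x) 0 + h * max (x - d) 0
      = (c * x - b * x + b * d + 0 * d ^ 2) + (b + h) * max (x - d) 0 := by
    intro d
    rcases le_total d x with hdx | hdx
    · rw [max_eq_right (by linarith), max_eq_left (by linarith)]; ring
    · rw [max_eq_left (by linarith), max_eq_right (by linarith)]; ring
  simp_rw [hcost]
  rw [integral_add (integrable_quadratic _ _ _ hQ) ((integrable_overage hQ).const_mul _),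
    integral_quadratic _ _ _ hQ, integral_const_mul]
  ring

lemma integral_overage_le (γ e : ℝ) (hQ : inMomentFamily μ σ Q)
    (hdom : ∀ d, 0 ≤ d → max (x - d) 0 ≤ γ * (d - e) ^ 2) :
    ∫ d, max (x - d) 0 ∂Q ≤ γ * ((μ - e) ^ 2 + σ ^ 2) := by
  have hquad : ∀ d : ℝ, γ * (d - e) ^ 2 = γ * e ^ 2 + (-2 * γ * e) * d + γ * d ^ 2 := by
    intro d; ring
  have hnonneg : ∀ᵐ d ∂Q, 0 ≤ d := by
    rw [ae_iff]; simpa [compl_def] using hQ.2.1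
  calc ∫ d, max (x - d) 0 ∂Q
      ≤ ∫ d, γ * (d - e) ^ 2 ∂Q := by
        refine integral_mono_ae (integrable_overage hQ) ?_ (hnonneg.mono hdom)
        simpa only [hquad] using integrable_quadratic _ _ _ hQ
    _ = γ * ((μ - e) ^ 2 + σ ^ 2) := by
        simp_rw [hquad]
        rw [integral_quadratic _ _ _ hQ]
        ring

end MomentFamily

lemma isGreatest_overageValues_of_twoPoint {μ σ x p q d₁ d₂ γ e : ℝ} (hp : 0 ≤ p) (hq : 0 ≤ q)
    (hpq : p + q = 1) (hd₁ : 0 ≤ d₁) (hd₂ : 0 ≤ d₂) (hm : p * d₁ + q * d₂ = μ)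
    (hm₂ : p * d₁ ^ 2 + q * d₂ ^ 2 = μ ^ 2 + σ ^ 2)
    (hdom : ∀ d, 0 ≤ d → max (x - d) 0 ≤ γ * (d - e) ^ 2)
    (hattain : p * max (x - d₁) 0 + q * max (x - d₂) 0 = γ * ((μ - e) ^ 2 + σ ^ 2)) :
    IsGreatest (overageValues μ σ x) (γ * ((μ - e) ^ 2 + σ ^ 2)) :=
  ⟨⟨twoPoint p q d₁ d₂, inMomentFamily_twoPoint hp hq hpq hd₁ hd₂ hm hm₂,
      (integral_twoPoint _ hp hq).trans hattain⟩,
    by rintro _ ⟨Q, hQ, rfl⟩; exact integral_overage_le γ e hQ hdom⟩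

lemma scarfPsi_eq_of_isGreatest {c b h μ σ x m : ℝ} (hbh : 0 ≤ b + h)
    (hm : IsGreatest (overageValues μ σ x) m) :
    scarfPsi c b h μ σ x = c * x + b * (μ - x) + (b + h) * m := by
  have himage : (fun Q : Measure ℝ => ∫ d, c * x + b * max (d - x) 0 + h * max (x - d) 0 ∂Q) ''
      {Q | inMomentFamily μ σ Q}
        = (fun t => c * x + b * (μ - x) + (b + h) * t) '' overageValues μ σ x := by
    rw [overageValues, image_image]
    exact image_congr fun Q hQ => integral_cost_eq c b h hQ
  rw [scarfPsi, himage]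
  exact (Monotone.map_isGreatest (fun s t hst => by gcongr) hm).csSup_eq

lemma max_sub_zero_le_one_div_mul_sq {x s : ℝ} (hs : 0 < s) (d : ℝ) :
    max (x - d) 0 ≤ 1 / (4 * s) * (d - (x + s)) ^ 2 := by
  rw [one_div_mul_eq_div, le_div_iff₀ (by positivity)]
  rcases le_total d x with hdx | hdx
  · rw [max_eq_left (by linarith)]
    nlinarith [sq_nonneg (d - x + s)]
  · rw [max_eq_right (by linarith), zero_mul]
    positivity

lemma max_sub_zero_le_div_sq_mul_sq {y a d : ℝ} (hy : 0 ≤ y) (hya : 2 * y ≤ a) (hd : 0 ≤ d) :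
    max (y - d) 0 ≤ y / a ^ 2 * (d - a) ^ 2 := by
  rcases le_or_gt y d with hyd | hdy
  · rw [max_eq_right (by linarith)]
    positivity
  · have ha : 0 < a := by linarith
    rw [max_eq_left (by linarith), div_mul_eq_mul_div, le_div_iff₀ (by positivity)]
    nlinarith [mul_nonneg hd (mul_nonneg ha.le (sub_nonneg.2 hya)),
      mul_nonneg hd (mul_nonneg hy hd)]

lemma isGreatest_overageValues_of_ge {μ σ x : ℝ} (hμ : 0 < μ) (hσ : 0 < σ)
    (hx : (μ ^ 2 + σ ^ 2) / (2 * μ) ≤ x) :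
    IsGreatest (overageValues μ σ x) ((x - μ + √((x - μ) ^ 2 + σ ^ 2)) / 2) := by
  set s := √((x - μ) ^ 2 + σ ^ 2)
  have hs : 0 < s := Real.sqrt_pos.2 (by positivity)
  have hs2 : s ^ 2 = (x - μ) ^ 2 + σ ^ 2 := Real.sq_sqrt (by positivity)
  have hx2 : μ ^ 2 + σ ^ 2 ≤ 2 * μ * x := by rwa [div_le_iff₀ (by positivity), mul_comm] at hx
  have hx0 : 0 < x := lt_of_lt_of_le (by positivity) hx
  have hsx : s ≤ x := by nlinarith
  have hsl : |x - μ| ≤ s := Real.abs_le_sqrt (by nlinarith)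
  have hval : (x - μ + s) / 2 = 1 / (4 * s) * ((μ - (x + s)) ^ 2 + σ ^ 2) := by
    field_simp
    linear_combination 2 * hs2
  rw [hval]
  refine isGreatest_overageValues_of_twoPoint (p := (s + x - μ) / (2 * s))
    (q := (s - x + μ) / (2 * s)) (d₁ := x - s) (d₂ := x + s)
    (div_nonneg (by linarith [neg_abs_le (x - μ)]) (by positivity))
    (div_nonneg (by linarith [le_abs_self (x - μ)]) (by positivity))
    (by field_simp; ring) (by linarith) (by linarith) (by field_simp; ring)
    (by field_simp; linear_combination 2 * s * hs2)
    (fun d _ => max_sub_zero_le_one_div_mul_sq hs d) ?_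
  rw [← hval, max_eq_left (by linarith), max_eq_right (by linarith)]
  field_simp
  ring

lemma isGreatest_overageValues_of_le {μ σ x : ℝ} (hμ : 0 < μ)
    (hx : x ≤ (μ ^ 2 + σ ^ 2) / (2 * μ)) :
    IsGreatest (overageValues μ σ x) (σ ^ 2 / (μ ^ 2 + σ ^ 2) * max x 0) := by
  set a := (μ ^ 2 + σ ^ 2) / μ
  have ha : 0 < a := by positivity
  have hxa : 2 * max x 0 ≤ a := by
    rcases le_total x 0 with h | h
    · rw [max_eq_right h]; linarith
    · rw [max_eq_left h, ← le_div_iff₀' two_pos, div_div, mul_comm μ]; exact hx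
  have hval : σ ^ 2 / (μ ^ 2 + σ ^ 2) * max x 0 = max x 0 / a ^ 2 * ((μ - a) ^ 2 + σ ^ 2) := by
    simp only [a]
    field_simp
    ring
  rw [hval]
  refine isGreatest_overageValues_of_twoPoint (p := σ ^ 2 / (μ ^ 2 + σ ^ 2))
    (q := μ ^ 2 / (μ ^ 2 + σ ^ 2)) (d₁ := 0) (d₂ := a) (by positivity) (by positivity)
    (by field_simp; ring) le_rfl ha.le (by simp only [a]; field_simp; ring)
    (by simp only [a]; field_simp; ring)
    (fun d hd => (max_le_max_right 0 (sub_le_sub_right (le_max_left x 0) d)).trans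
      (max_sub_zero_le_div_sq_mul_sq (le_max_right x 0) hxa hd)) ?_
  rw [← hval, sub_zero, max_eq_right (show x - a ≤ 0 by linarith [le_max_left x 0])]
  ring

/-- Scarf's explicit worst-case cost formula in each of the three regimes of x. -/
theorem scarf_psi_formula (b c h μ σ : ℝ) (hbc : c < b) (hch : 0 < c + h)
    (hμ : 0 < μ) (hσ : 0 < σ) :
    (∀ x : ℝ, (μ ^ 2 + σ ^ 2) / (2 * μ) ≤ x →
      scarfPsi c b h μ σ x = c * μ +
        (b + h) / 2 * Real.sqrt ((x - μ) ^ 2 + σ ^ 2) -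
        (b - h - 2 * c) / 2 * (x - μ)) ∧
    (∀ x : ℝ, 0 ≤ x → x < (μ ^ 2 + σ ^ 2) / (2 * μ) →
      scarfPsi c b h μ σ x =
        ((h + c) * σ ^ 2 - (b - c) * μ ^ 2) / (μ ^ 2 + σ ^ 2) * x + b * μ) ∧
    (∀ x : ℝ, x < 0 → scarfPsi c b h μ σ x = b * μ - (b - c) * x) := by
  have hbh : 0 ≤ b + h := by linarith
  refine ⟨fun x hx => ?_, fun x hx₀ hx => ?_, fun x hx => ?_⟩
  · rw [scarfPsi_eq_of_isGreatest hbh (isGreatest_overageValues_of_ge hμ hσ hx)]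
    ring
  · rw [scarfPsi_eq_of_isGreatest hbh (isGreatest_overageValues_of_le hμ hx.le),
      max_eq_left hx₀]
    field_simp
    ring
  · rw [scarfPsi_eq_of_isGreatest hbh
        (isGreatest_overageValues_of_le hμ (hx.le.trans (by positivity))),
      max_eq_right hx.le]
    ring
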